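/- arXiv:2303.06299 — 8 statements merged into one kernel-verified Lean document; each statement's English description precedes it below -/
import Mathlib

section
/- Let G be a graph and H its i-graph. A vertex X of H (corresponding to an i-set X of G) has degree at least 1 in H if and only if there exists v ∈ X and u ∈ epn(v,X) such that u dominates pn(v,X) in G. -/
open Finset

variable {V : Type*}

/-- `S` is an independent dominating (equivalently, maximal independent) set of `G`. -/
def IndepDom (G : SimpleGraph V) (S : Finset V) : Prop :=
  (∀ ⦃x⦄, x ∈ S → ∀ ⦃y⦄, y ∈ S → ¬ G.Adj x y) ∧ ∀ v, v ∉ S → ∃ u ∈ S, G.Adj u v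

/-- The independent domination number `i(G)`. -/
noncomputable def iNum (G : SimpleGraph V) : ℕ :=
  sInf {n | ∃ S : Finset V, IndepDom G S ∧ S.card = n}

/-- An `i`-set: a maximal independent set of minimum cardinality. -/
def IsISet (G : SimpleGraph V) (S : Finset V) : Prop :=
  IndepDom G S ∧ S.card = iNum G

/-- The `i`-graph of `G`: vertices are the `i`-sets of `G`, two of them adjacent iff their
symmetric difference is a pair of adjacent vertices of `G`. -/
def iGraph (G : SimpleGraph V) [DecidableEq V] : SimpleGraph {S : Finset V // IsISet G S} where
  Adj X Y := ∃ x y, G.Adj x y ∧ symmDiff X.1 Y.1 = {x, y}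
  symm := by
    constructor
    rintro X Y ⟨x, y, hxy, h⟩
    exact ⟨x, y, hxy, by rwa [symmDiff_comm]⟩
  loopless := by
    constructor
    rintro X ⟨x, y, hxy, h⟩
    rw [symmDiff_self] at h
    exact (Finset.insert_ne_empty x {y}) (by simpa [eq_comm] using h)

/-- The closed neighbourhood `N[v]` of `v`, as a set. -/
def closedNbr (G : SimpleGraph V) (v : V) : Set V := {u | u = v ∨ G.Adj v u}

/-- The private neighbourhood `pn(v,S) = N[v] − N[S − {v}]`. -/
def pn (G : SimpleGraph V) (v : V) (S : Finset V) : Set V :=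
  closedNbr G v \ ⋃ w ∈ (S : Set V) \ {v}, closedNbr G w

/-- The external private neighbourhood `epn(v,S) = pn(v,S) − {v}`. -/
def epn (G : SimpleGraph V) (v : V) (S : Finset V) : Set V := pn G v S \ {v}

/-!
Exchanging `v ∈ X` for a neighbour `u ∉ X` yields a set of the same size, so `X` has a
neighbour in the `i`-graph iff some such exchange is again independent and dominating. The
exchanged set is independent iff `u` has no neighbour in `X - {v}`, i.e. `u ∈ epn(v,X)`; it is
dominating iff every vertex that lost its only dominator `v`, i.e. every vertex of `pn(v,X)`,
is dominated by `u`. Two `i`-sets adjacent in the `i`-graph always arise this way, since equal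
cardinality puts the two vertices of their symmetric difference on opposite sides.
-/

section Finset

variable [DecidableEq V] {X Y : Finset V} {a b u v : V}

lemma Finset.mem_insert_erase_iff : u ∈ insert b (X.erase a) ↔ u = b ∨ (u ∈ X ∧ u ≠ a) := by
  rw [mem_insert, mem_erase, and_comm]

lemma Finset.symmDiff_insert_erase (ha : a ∈ X) (hb : b ∉ X) :
    symmDiff X (insert b (X.erase a)) = {a, b} := by
  ext z
  simp only [mem_symmDiff, mem_insert, mem_erase, mem_singleton]
  grind

lemma Finset.eq_insert_erase_of_symmDiff_eq_pair (hcard : X.card = Y.card)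
    (h : symmDiff X Y = {a, b}) (ha : a ∈ X) : b ∉ X ∧ Y = insert b (X.erase a) := by
  have hsd : ∀ z, (z ∈ X ∧ z ∉ Y) ∨ (z ∈ Y ∧ z ∉ X) ↔ z = a ∨ z = b := by
    simpa [Finset.ext_iff, mem_symmDiff] using h
  have haY : a ∉ Y := fun haY => by grind
  have hb : b ∈ Y ∧ b ∉ X := by
    by_contra hb
    have hYX : Y \ X = ∅ := by
      ext z
      simp only [mem_sdiff, notMem_empty, iff_false, not_and, not_not]
      grind
    have hXY : (X \ Y).card = 0 := by rw [card_sdiff_comm hcard, hYX, card_empty]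
    exact (card_pos.2 ⟨a, mem_sdiff.2 ⟨ha, haY⟩⟩).ne' hXY
  refine ⟨hb.2, ?_⟩
  ext z
  rw [Finset.mem_insert_erase_iff]
  grind

end Finset

variable {G : SimpleGraph V}

lemma mem_pn_iff {v w : V} {S : Finset V} :
    w ∈ pn G v S ↔ (w = v ∨ G.Adj v w) ∧ ∀ s ∈ S, s ≠ v → ¬(w = s ∨ G.Adj s w) := by
  simp [pn, closedNbr]

lemma adj_of_mem_epn {u v : V} {S : Finset V} (hu : u ∈ epn G v S) : G.Adj v u :=
  (mem_pn_iff.1 hu.1).1.resolve_left hu.2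

lemma notMem_of_mem_epn {u v : V} {S : Finset V} (hu : u ∈ epn G v S) : u ∉ S := fun huS =>
  (mem_pn_iff.1 hu.1).2 u huS (adj_of_mem_epn hu).ne' (Or.inl rfl)

section Exchange

variable [DecidableEq V] {X : Finset V} {u v : V}

lemma mem_epn_and_pn_subset_of_indepDom_insert_erase (hu : u ∉ X) (huv : G.Adj v u)
    (hY : IndepDom G (insert u (X.erase v))) :
    u ∈ epn G v X ∧ pn G v X ⊆ closedNbr G u := by
  obtain ⟨hYind, hYdom⟩ := hY
  have hupn : u ∈ pn G v X := mem_pn_iff.2 ⟨Or.inr huv, fun s hs hsv hsu =>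
    hsu.elim (fun hus => hu (hus ▸ hs))
      (hYind (mem_insert_erase_iff.2 (Or.inr ⟨hs, hsv⟩)) (mem_insert_self u _))⟩
  refine ⟨⟨hupn, huv.ne'⟩, fun w hw => ?_⟩
  have hwpriv := (mem_pn_iff.1 hw).2
  by_cases hwY : w ∈ insert u (X.erase v)
  · rcases mem_insert_erase_iff.1 hwY with rfl | ⟨hwX, hwv⟩
    · exact Or.inl rfl
    · exact absurd (Or.inl rfl) (hwpriv w hwX hwv)
  · obtain ⟨s, hs, hsw⟩ := hYdom w hwY
    rcases mem_insert_erase_iff.1 hs with rfl | ⟨hsX, hsv⟩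
    · exact Or.inr hsw
    · exact absurd (Or.inr hsw) (hwpriv s hsX hsv)

lemma IndepDom.insert_erase (hX : IndepDom G X) (hu : u ∈ epn G v X)
    (hdom : pn G v X ⊆ closedNbr G u) : IndepDom G (insert u (X.erase v)) := by
  have hupriv := (mem_pn_iff.1 hu.1).2
  refine ⟨fun a ha b hb hab => ?_, fun w hw => ?_⟩
  · rcases mem_insert_erase_iff.1 ha with rfl | ⟨haX, hav⟩ <;>
      rcases mem_insert_erase_iff.1 hb with rfl | ⟨hbX, hbv⟩
    · exact G.loopless.irrefl _ hab
    · exact hupriv b hbX hbv (Or.inr hab.symm)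
    · exact hupriv a haX hav (Or.inr hab)
    · exact hX.1 haX hbX hab
  by_cases hwv : w = v
  · exact ⟨u, mem_insert_self u _, hwv ▸ (adj_of_mem_epn hu).symm⟩
  have hwX : w ∉ X := fun h => hw (mem_insert_erase_iff.2 (Or.inr ⟨h, hwv⟩))
  by_cases hother : ∃ s ∈ X, s ≠ v ∧ G.Adj s w
  · obtain ⟨s, hsX, hsv, hsw⟩ := hother
    exact ⟨s, mem_insert_erase_iff.2 (Or.inr ⟨hsX, hsv⟩), hsw⟩
  -- `w` is then a private neighbour of `v`, hence dominated by `u`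
  push Not at hother
  obtain ⟨s, hsX, hsw⟩ := hX.2 w hwX
  obtain rfl : s = v := by_contra fun hsv => hother s hsX hsv hsw
  have hwpn : w ∈ pn G s X := mem_pn_iff.2 ⟨Or.inr hsw, fun t htX hts htw =>
    htw.elim (fun hwt => hwX (hwt ▸ htX)) (hother t htX hts)⟩
  exact ⟨u, mem_insert_self u _,
    (hdom hwpn).resolve_left fun hwu => hw (mem_insert_erase_iff.2 (Or.inl hwu))⟩

lemma IsISet.insert_erase (hX : IsISet G X) (hv : v ∈ X) (hu : u ∉ X)
    (hY : IndepDom G (insert u (X.erase v))) : IsISet G (insert u (X.erase v)) := by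
  refine ⟨hY, ?_⟩
  rw [card_insert_of_notMem fun h => hu (mem_of_mem_erase h), card_erase_add_one hv, hX.2]

lemma iGraph_adj_iff {X Y : {S : Finset V // IsISet G S}} :
    (iGraph G).Adj X Y ↔ ∃ v ∈ X.1, ∃ u ∉ X.1, G.Adj v u ∧ Y.1 = insert u (X.1.erase v) := by
  constructor
  · rintro ⟨x, y, hxy, h⟩
    have hcard : X.1.card = Y.1.card := X.2.2.trans Y.2.2.symm
    have swap (a b : V) (hab : G.Adj a b) (h : symmDiff X.1 Y.1 = {a, b}) (ha : a ∈ X.1) :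
        ∃ v ∈ X.1, ∃ u ∉ X.1, G.Adj v u ∧ Y.1 = insert u (X.1.erase v) :=
      have hb := Finset.eq_insert_erase_of_symmDiff_eq_pair hcard h ha
      ⟨a, ha, b, hb.1, hab, hb.2⟩
    obtain ⟨z, hz⟩ : (X.1 \ Y.1).Nonempty := sdiff_nonempty.2 fun hXY => by
      rw [eq_of_subset_of_card_le hXY hcard.ge, symmDiff_self] at h
      exact insert_ne_empty x {y} h.symm
    have hzX := (mem_sdiff.1 hz).1
    have hz' : z ∈ symmDiff X.1 Y.1 := mem_symmDiff.2 (Or.inl (mem_sdiff.1 hz))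
    rw [h, mem_insert, mem_singleton] at hz'
    rcases hz' with rfl | rfl
    · exact swap z y hxy h hzX
    · exact swap z x hxy.symm (h.trans (pair_comm x z)) hzX
  · rintro ⟨v, hv, u, hu, huv, hY⟩
    exact ⟨v, u, huv, hY ▸ Finset.symmDiff_insert_erase hv hu⟩

end Exchange

theorem iGraph_degree_pos_iff_general {V : Type*} [DecidableEq V] (G : SimpleGraph V)
    (X : {S : Finset V // IsISet G S}) :
    ((iGraph G).neighborSet X).Nonempty ↔
      ∃ v ∈ X.1, ∃ u ∈ epn G v X.1, ∀ w ∈ pn G v X.1, w ∈ closedNbr G u := by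
  constructor
  · rintro ⟨Y, hXY⟩
    obtain ⟨v, hv, u, hu, huv, hY⟩ := iGraph_adj_iff.1 hXY
    exact ⟨v, hv, u, mem_epn_and_pn_subset_of_indepDom_insert_erase hu huv (hY ▸ Y.2.1)⟩
  · rintro ⟨v, hv, u, hu, hdom⟩
    have huX := notMem_of_mem_epn hu
    exact ⟨⟨_, X.2.insert_erase hv huX (X.2.1.insert_erase hu hdom)⟩,
      iGraph_adj_iff.2 ⟨v, hv, u, huX, adj_of_mem_epn hu, rfl⟩⟩

/-- A vertex `X` of the `i`-graph of `G` has degree at least 1 (i.e. has a neighbour) iff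
for some `v ∈ X` there exists `u ∈ epn(v,X)` such that `u` dominates `pn(v,X)`. -/
theorem iGraph_degree_pos_iff {V : Type*} [Fintype V] [DecidableEq V] (G : SimpleGraph V)
    (X : {S : Finset V // IsISet G S}) :
    ((iGraph G).neighborSet X).Nonempty ↔
      ∃ v ∈ X.1, ∃ u ∈ epn G v X.1, ∀ w ∈ pn G v X.1, w ∈ closedNbr G u :=
  iGraph_degree_pos_iff_general G X
end

section
/- Let G be a graph with i-graph H. Suppose XY and YZ are edges of H with the token slides X → Y replacing x by y₁ (so Y = (X \ {x}) ∪ {y₁}) and Y → Z replacing y₂ by z (so Z = (Y \ {y₂}) ∪ {z}), and X ≠ Z. Then XZ is an edge of H if and only if y₁ = y₂. -/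
open Finset

variable {V : Type*}

/-!
If `y₁ = y₂`, then `Z` arises from `X` by sliding `x` to `z`; a vertex of `X` dominating `z`
must be `x`, since any other one stays in the independent set `Z`, so `XZ` is an edge.
If `y₁ ≠ y₂`, then both `y₁` and `y₂` lie in `X ∆ Z`; were `XZ` an edge, this would be a pair
of adjacent vertices, yet both lie in the independent set `Y`.
-/

theorem SimpleGraph.adj_of_mem_symmDiff_eq_pair [DecidableEq V] {G : SimpleGraph V}
    {S T : Finset V} {a b u v : V} (hST : symmDiff S T = {a, b}) (hab : G.Adj a b)
    (hu : u ∈ symmDiff S T) (hv : v ∈ symmDiff S T) (huv : u ≠ v) : G.Adj u v := by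
  rw [hST, mem_insert, mem_singleton] at hu hv
  rcases hu with rfl | rfl <;> rcases hv with rfl | rfl
  exacts [absurd rfl huv, hab, hab.symm, absurd rfl huv]

theorem Finset.symmDiff_insert_erase_s2 [DecidableEq V] {S : Finset V} {x z : V}
    (hx : x ∈ S) (hz : z ∉ S) : symmDiff S (insert z (S.erase x)) = {x, z} := by
  ext w
  by_cases hwx : w = x
  · subst hwx
    simp [mem_symmDiff, hx, ne_of_mem_of_not_mem hx hz]
  · by_cases hwz : w = z
    · subst hwz
      simp [mem_symmDiff, hz]
    · simp [mem_symmDiff, hwx, hwz]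

theorem IndepDom.adj_of_insert_erase [DecidableEq V] {G : SimpleGraph V} {S : Finset V}
    {x z : V} (hS : IndepDom G S) (hS' : IndepDom G (insert z (S.erase x))) (hz : z ∉ S) :
    G.Adj x z := by
  obtain ⟨u, hu, huz⟩ := hS.2 z hz
  by_cases hux : u = x
  · exact hux ▸ huz
  · exact absurd huz (hS'.1 (mem_insert_of_mem (mem_erase.2 ⟨hux, hu⟩)) (mem_insert_self z _))

theorem iGraph_adj_of_eq_insert_erase [DecidableEq V] {G : SimpleGraph V}
    (X Z : {S : Finset V // IsISet G S}) {x z : V} (hx : x ∈ X.1) (hz : z ∉ X.1)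
    (hZ : Z.1 = insert z (X.1.erase x)) : (iGraph G).Adj X Z :=
  ⟨x, z, X.2.1.adj_of_insert_erase (hZ ▸ Z.2.1) hz, by rw [hZ, symmDiff_insert_erase_s2 hx hz]⟩

theorem iGraph_triangle_iff_general {V : Type*} [DecidableEq V] (G : SimpleGraph V)
    (X Y Z : {S : Finset V // IsISet G S}) (x y₁ y₂ z : V)
    (hx : x ∈ X.1) (hxy : G.Adj x y₁) (hY : Y.1 = insert y₁ (X.1.erase x))
    (hy₂ : y₂ ∈ Y.1) (hyz : G.Adj y₂ z) (hZ : Z.1 = insert z (Y.1.erase y₂))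
    (hXZ : X ≠ Z) :
    (iGraph G).Adj X Z ↔ y₁ = y₂ := by
  have hy₁X : y₁ ∉ X.1 := fun h => X.2.1.1 hx h hxy
  have hy₁Y : y₁ ∈ Y.1 := hY ▸ mem_insert_self _ _
  constructor
  · rintro ⟨a, b, hab, hXZab⟩
    by_contra hne
    have hy₂X : y₂ ∈ X.1 := by
      rw [hY, mem_insert] at hy₂
      exact mem_of_mem_erase (hy₂.resolve_left (Ne.symm hne))
    have hy₁XZ : y₁ ∈ symmDiff X.1 Z.1 := by simp [mem_symmDiff, hZ, hne, hy₁Y, hy₁X]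
    have hy₂XZ : y₂ ∈ symmDiff X.1 Z.1 := by simp [mem_symmDiff, hZ, hy₂X, hyz.ne]
    exact Y.2.1.1 hy₁Y hy₂ (G.adj_of_mem_symmDiff_eq_pair hXZab hab hy₁XZ hy₂XZ hne)
  · rintro rfl
    have hZX : Z.1 = insert z (X.1.erase x) := by
      rw [hZ, hY, erase_insert fun h => hy₁X (mem_of_mem_erase h)]
    have hzx : z ≠ x := by
      rintro rfl
      exact hXZ (Subtype.ext (by rw [hZX, insert_erase hx]))
    have hzX : z ∉ X.1 := fun h => Y.2.1.1 hy₂ (by simp [hY, hzx, h]) hyz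
    exact iGraph_adj_of_eq_insert_erase X Z hx hzX hZX

/-- If `X → Y` slides token `x` to `y₁` and `Y → Z` slides token `y₂` to `z`, with `X ≠ Z`,
then `XZ` is an edge of the `i`-graph iff `y₁ = y₂`. -/
theorem iGraph_triangle_iff {V : Type*} [Fintype V] [DecidableEq V] (G : SimpleGraph V)
    (X Y Z : {S : Finset V // IsISet G S}) (x y₁ y₂ z : V)
    (hXY : (iGraph G).Adj X Y) (hYZ : (iGraph G).Adj Y Z)
    (hx : x ∈ X.1) (hxy : G.Adj x y₁) (hY : Y.1 = insert y₁ (X.1.erase x))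
    (hy₂ : y₂ ∈ Y.1) (hyz : G.Adj y₂ z) (hZ : Z.1 = insert z (Y.1.erase y₂))
    (hXZ : X ≠ Z) :
    (iGraph G).Adj X Z ↔ y₁ = y₂ :=
  iGraph_triangle_iff_general G X Y Z x y₁ y₂ z hx hxy hY hy₂ hyz hZ hXZ
end

section
/- Let G be a graph with i-graph H, and suppose H contains an induced star K_{1,m} centered at vertex X with leaves Y₁,…,Y_m, where deg_H(X) = m. Then for i ≠ j: (i) X − Y_i ≠ X − Y_j; (ii) |Y_i ∩ Y_j| = i(G) − 2; and (iii) m ≤ i(G). -/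
open Finset

variable {V : Type*}

/-!
Each leaf `Y i` arises from `X` by exchanging a vertex `x i ∈ X` for a neighbour `y i ∉ X`.
If two leaves removed the same vertex, the vertex added to one of them is dominated in the other
only by the vertex added there, so the two leaves would be adjacent in the `i`-graph. Once the
removed vertices are distinct, so are the added ones (`x j ∈ Y i` is adjacent to `y j`), and
`Y i ∩ Y j = X \ {x i, x j}`; finally `i ↦ x i` embeds the leaves into `X`, so `m ≤ i(G)`.
-/

namespace Finset

variable {α : Type*} [DecidableEq α] {s t : Finset α} {a b x y : α}

theorem eq_insert_erase_of_sdiff_eq_singleton (ha : s \ t = {a}) (hb : t \ s = {b}) :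
    t = insert b (s.erase a) := by
  ext v
  have hav := Finset.ext_iff.mp ha v
  have hbv := Finset.ext_iff.mp hb v
  simp only [mem_sdiff, mem_singleton] at hav hbv
  simp only [mem_insert, mem_erase]
  tauto

theorem exists_eq_insert_erase_of_symmDiff_eq_pair (hcard : #s = #t) (hxy : x ≠ y)
    (h : symmDiff s t = {x, y}) :
    ∃ a ∈ s, ∃ b ∉ s, t = insert b (s.erase a) ∧ (a = x ∧ b = y ∨ a = y ∧ b = x) := by
  have hsum : #(s \ t) + #(t \ s) = 2 := by
    rw [← card_union_of_disjoint disjoint_sdiff_sdiff, ← Finset.symmDiff_def, h, card_pair hxy]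
  have hcomm : #(s \ t) = #(t \ s) := card_sdiff_comm hcard
  obtain ⟨a, ha⟩ := card_eq_one.mp (show #(s \ t) = 1 by omega)
  obtain ⟨b, hb⟩ := card_eq_one.mp (show #(t \ s) = 1 by omega)
  have has : a ∈ s \ t := ha ▸ mem_singleton_self a
  have hbs : b ∈ t \ s := hb ▸ mem_singleton_self b
  refine ⟨a, (mem_sdiff.mp has).1, b, (mem_sdiff.mp hbs).2,
    eq_insert_erase_of_sdiff_eq_singleton ha hb, ?_⟩
  have hab : ({a, b} : Set α) = {x, y} := by
    rw [← coe_pair, ← coe_pair, ← h, Finset.symmDiff_def, ha, hb, ← insert_eq]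
  exact Set.pair_eq_pair_iff.mp hab

theorem symmDiff_insert_insert (ha : a ∉ s) (hb : b ∉ s) (hab : a ≠ b) :
    symmDiff (insert a s) (insert b s) = {a, b} := by
  ext v
  simp only [mem_symmDiff, mem_insert, mem_singleton]
  grind

theorem sdiff_insert_erase (hx : x ∈ s) (hy : y ∉ s) : s \ insert y (s.erase x) = {x} := by
  ext v
  simp only [mem_sdiff, mem_insert, mem_erase, mem_singleton]
  grind

theorem card_insert_erase_inter_insert_erase (hxs : x ∈ s) (hys : y ∈ s) (hxy : x ≠ y)
    (ha : a ∉ s) (hb : b ∉ s) (hab : a ≠ b) :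
    #(insert a (s.erase x) ∩ insert b (s.erase y)) = #s - 2 := by
  have hinter : insert a (s.erase x) ∩ insert b (s.erase y) = (s.erase x).erase y := by
    ext v
    simp only [mem_inter, mem_insert, mem_erase]
    grind
  rw [hinter, card_erase_of_mem (mem_erase.mpr ⟨hxy.symm, hys⟩), card_erase_of_mem hxs]
  omega

end Finset

variable [DecidableEq V] {G : SimpleGraph V}

theorem exists_insert_erase_of_iGraph_adj {X W : {S : Finset V // IsISet G S}}
    (h : (iGraph G).Adj X W) :
    ∃ x ∈ X.1, ∃ y ∉ X.1, G.Adj x y ∧ W.1 = insert y (X.1.erase x) := by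
  obtain ⟨x, y, hxy, hXW⟩ := h
  obtain ⟨a, ha, b, hb, hW, hab⟩ :=
    exists_eq_insert_erase_of_symmDiff_eq_pair (X.2.2.trans W.2.2.symm) hxy.ne hXW
  refine ⟨a, ha, b, hb, ?_, hW⟩
  rcases hab with ⟨rfl, rfl⟩ | ⟨rfl, rfl⟩
  exacts [hxy, hxy.symm]

theorem IndepDom.adj_of_insert_erase_s4 {X : Finset V} {x y₁ y₂ : V} (hy₁ : y₁ ∉ X)
    (hne : y₁ ≠ y₂) (h₁ : IndepDom G (insert y₁ (X.erase x)))
    (h₂ : IndepDom G (insert y₂ (X.erase x))) : G.Adj y₁ y₂ := by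
  obtain ⟨u, hu, huy⟩ := h₂.2 y₁ (by simp [hne, hy₁])
  rcases mem_insert.mp hu with rfl | hu
  · exact huy.symm
  · exact absurd huy (h₁.1 (mem_insert_of_mem hu) (mem_insert_self y₁ _))

theorem removed_ne_of_not_iGraph_adj {X : Finset V} {x₁ x₂ y₁ y₂ : V}
    {Y₁ Y₂ : {S : Finset V // IsISet G S}} (hne : Y₁ ≠ Y₂) (hnadj : ¬ (iGraph G).Adj Y₁ Y₂)
    (hy₁ : y₁ ∉ X) (hy₂ : y₂ ∉ X) (h₁ : Y₁.1 = insert y₁ (X.erase x₁))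
    (h₂ : Y₂.1 = insert y₂ (X.erase x₂)) : x₁ ≠ x₂ := by
  rintro rfl
  have hy : y₁ ≠ y₂ := by
    rintro rfl
    exact hne (Subtype.ext (h₁.trans h₂.symm))
  refine hnadj ⟨y₁, y₂, IndepDom.adj_of_insert_erase_s4 hy₁ hy (h₁ ▸ Y₁.2.1) (h₂ ▸ Y₂.2.1), ?_⟩
  rw [h₁, h₂]
  exact symmDiff_insert_insert (by simp [hy₁]) (by simp [hy₂]) hy

theorem added_ne_of_removed_ne {X : Finset V} {x₁ x₂ y₁ y₂ : V}
    (h₁ : IndepDom G (insert y₁ (X.erase x₁))) (hx₂ : x₂ ∈ X) (hx : x₁ ≠ x₂)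
    (hxy₂ : G.Adj x₂ y₂) : y₁ ≠ y₂ := by
  rintro rfl
  exact h₁.1 (mem_insert_of_mem (mem_erase.mpr ⟨hx.symm, hx₂⟩)) (mem_insert_self y₁ _) hxy₂

theorem iGraph_induced_star_general {V : Type*} [DecidableEq V] (G : SimpleGraph V)
    (m : ℕ) (X : {S : Finset V // IsISet G S}) (Y : Fin m → {S : Finset V // IsISet G S})
    (hinj : Function.Injective Y)
    (hadj : ∀ i, (iGraph G).Adj X (Y i))
    (hind : ∀ i j, i ≠ j → ¬ (iGraph G).Adj (Y i) (Y j)) :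
    (∀ i j, i ≠ j → X.1 \ (Y i).1 ≠ X.1 \ (Y j).1) ∧
    (∀ i j, i ≠ j → ((Y i).1 ∩ (Y j).1).card = iNum G - 2) ∧
    m ≤ iNum G := by
  choose x hxX y hyX hxy hY using fun i => exists_insert_erase_of_iGraph_adj (hadj i)
  have hx : ∀ i j, i ≠ j → x i ≠ x j := fun i j hij =>
    removed_ne_of_not_iGraph_adj (hinj.ne hij) (hind i j hij) (hyX i) (hyX j) (hY i) (hY j)
  have hy : ∀ i j, i ≠ j → y i ≠ y j := fun i j hij =>
    added_ne_of_removed_ne (hY i ▸ (Y i).2.1) (hxX j) (hx i j hij) (hxy j)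
  refine ⟨fun i j hij => ?_, fun i j hij => ?_, ?_⟩
  · rw [hY i, hY j, sdiff_insert_erase (hxX i) (hyX i), sdiff_insert_erase (hxX j) (hyX j),
      Ne, singleton_inj]
    exact hx i j hij
  · rw [hY i, hY j, card_insert_erase_inter_insert_erase (hxX i) (hxX j) (hx i j hij) (hyX i)
      (hyX j) (hy i j hij), X.2.2]
  · calc m = #(univ : Finset (Fin m)) := (card_fin m).symm
      _ ≤ #X.1 := card_le_card_of_injOn x (fun i _ => hxX i)
          (fun i _ j _ h => by_contra fun hij => hx i j hij h)
      _ = iNum G := X.2.2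

/-- If the `i`-graph of `G` contains an induced star `K_{1,m}` centered at `X` with leaves
`Y₁, …, Y_m` and `deg X = m`, then the removed vertices are pairwise distinct, any two leaves
intersect in `i(G) − 2` vertices, and `m ≤ i(G)`. -/
theorem iGraph_induced_star {V : Type*} [Fintype V] [DecidableEq V] (G : SimpleGraph V)
    (m : ℕ) (X : {S : Finset V // IsISet G S}) (Y : Fin m → {S : Finset V // IsISet G S})
    (hinj : Function.Injective Y)
    (hadj : ∀ i, (iGraph G).Adj X (Y i))
    (hind : ∀ i j, i ≠ j → ¬ (iGraph G).Adj (Y i) (Y j))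
    (hdeg : ∀ W, (iGraph G).Adj X W → ∃ i, W = Y i) :
    (∀ i j, i ≠ j → X.1 \ (Y i).1 ≠ X.1 \ (Y j).1) ∧
    (∀ i j, i ≠ j → ((Y i).1 ∩ (Y j).1).card = iNum G - 2) ∧
    m ≤ iNum G :=
  iGraph_induced_star_general G m X Y hinj hadj hind
end

section
/- Let G be a graph with i-graph H containing an induced 4-cycle X, A, B, Y (with XY, AB non-edges of H). If X = {x₁, x₂, v₃, …, v_k}, then without loss of generality A = (X \ {x₁}) ∪ {y₁}, B = (X \ {x₂}) ∪ {y₂}, and Y = (X \ {x₁, x₂}) ∪ {y₁, y₂} for some vertices y₁, y₂ of G. -/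
open Finset

variable {V : Type*}

/-! Adjacent i-sets differ by one slide: `X \ A = {x}` and `A \ X = {y}` with `x ~ y`. Distinct
non-adjacent i-sets `X, Y` differ in at least two vertices: if `X \ Y = {u}` and `Y \ X = {w}`,
the vertex of `X` dominating `w` can only be `u`, so `X ~ Y`. Writing the slides `X → A → Y` as
`x₁ → y₁` and `a₁ → b₁`, the inclusions `X \ Y ⊆ {x₁, a₁}` and `Y \ X ⊆ {b₁, y₁}` are therefore
equalities, and likewise for `B`. Then `x₁ ≠ x₂` and `y₁ ≠ y₂`: otherwise `A = B`, or `A` or `B`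
would contain both ends of an edge. -/

namespace Finset

variable {α : Type*} [DecidableEq α] {s t u : Finset α} {x y : α}

lemma mem_pair {z : α} : z ∈ ({x, y} : Finset α) ↔ z = x ∨ z = y := by
  rw [mem_insert, mem_singleton]

lemma mem_sdiff_of_sdiff_eq_singleton (h : s \ t = {x}) : x ∈ s ∧ x ∉ t :=
  mem_sdiff.1 (h ▸ mem_singleton_self x)

lemma eq_insert_erase_of_sdiff_eq_singleton_s5 (hx : s \ t = {x}) (hy : t \ s = {y}) :
    t = insert y (s.erase x) := by
  rw [insert_eq, ← sdiff_singleton_eq_erase, ← hx, ← hy, sdiff_sdiff_self_left, inter_comm,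
    sdiff_union_inter]

lemma sdiff_eq_singletons_of_symmDiff_eq_pair (hst : #s = #t) (hxy : x ≠ y)
    (h : symmDiff s t = {x, y}) :
    s \ t = {x} ∧ t \ s = {y} ∨ s \ t = {y} ∧ t \ s = {x} := by
  have hsum : #(s \ t) + #(t \ s) = 2 := by
    rw [← card_union_of_disjoint disjoint_sdiff_sdiff, ← Finset.symmDiff_def, h, card_pair hxy]
  have hcomm : #(s \ t) = #(t \ s) := card_sdiff_comm hst
  obtain ⟨p, hp⟩ := card_eq_one.1 (show #(s \ t) = 1 by omega)
  obtain ⟨q, hq⟩ := card_eq_one.1 (show #(t \ s) = 1 by omega)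
  have hpq : ({p, q} : Finset α) = {x, y} := by rw [← h, Finset.symmDiff_def, hp, hq]; rfl
  rw [hp, hq]
  simp only [singleton_inj]
  exact Set.pair_eq_pair_iff.1 (by simpa using congrArg ((↑) : Finset α → Set α) hpq)

lemma sdiff_eq_pair_of_sdiff_eq_singleton (hst : s \ t = {x}) (htu : t \ u = {y})
    (hsu : 2 ≤ #(s \ u)) : s \ u = {x, y} :=
  eq_of_subset_of_card_le (by simpa [hst, htu] using sdiff_triangle s t u)
    (card_le_two.trans hsu)

end Finset

lemma IndepDom.adj_of_sdiff_eq_singleton {G : SimpleGraph V} [DecidableEq V] {S T : Finset V}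
    {u w : V} (hS : IndepDom G S) (hT : IndepDom G T) (hu : S \ T = {u}) (hw : T \ S = {w}) :
    G.Adj u w := by
  obtain ⟨hwT, hwS⟩ := mem_sdiff_of_sdiff_eq_singleton hw
  obtain ⟨v, hvS, hvw⟩ := hS.2 w hwS
  have hvT : v ∉ T := fun hvT => hT.1 hvT hwT hvw
  rwa [← mem_singleton.1 (hu ▸ mem_sdiff.2 ⟨hvS, hvT⟩ : v ∈ ({u} : Finset V))]

lemma IndepDom.not_adj_of_eq_insert_erase [DecidableEq V] {G : SimpleGraph V} {P S : Finset V}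
    {x y v : V} (hP : IndepDom G P) (hPS : P = insert y (S.erase x)) (hv : v ∈ S) (hvx : v ≠ x) :
    ¬ G.Adj v y :=
  hP.1 (hPS ▸ mem_insert_of_mem (mem_erase.2 ⟨hvx, hv⟩)) (hPS ▸ mem_insert_self y _)

lemma IsISet.card_eq {G : SimpleGraph V} {S T : Finset V} (hS : IsISet G S) (hT : IsISet G T) :
    #S = #T :=
  hS.2.trans hT.2.symm

section iGraph

variable [DecidableEq V] {G : SimpleGraph V} {X Y : {S : Finset V // IsISet G S}}

lemma iGraph_adj_iff_s5 :
    (iGraph G).Adj X Y ↔ ∃ x y, G.Adj x y ∧ X.1 \ Y.1 = {x} ∧ Y.1 \ X.1 = {y} := by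
  constructor
  · rintro ⟨x, y, hxy, h⟩
    rcases sdiff_eq_singletons_of_symmDiff_eq_pair (X.2.card_eq Y.2) hxy.ne h with
      ⟨hx, hy⟩ | ⟨hy, hx⟩
    · exact ⟨x, y, hxy, hx, hy⟩
    · exact ⟨y, x, hxy.symm, hy, hx⟩
  · rintro ⟨x, y, hxy, hx, hy⟩
    exact ⟨x, y, hxy, by rw [Finset.symmDiff_def, hx, hy]; rfl⟩

lemma two_le_card_sdiff_of_not_adj (hne : X ≠ Y) (h : ¬ (iGraph G).Adj X Y) :
    2 ≤ #(X.1 \ Y.1) := by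
  have hcomm : #(X.1 \ Y.1) = #(Y.1 \ X.1) := card_sdiff_comm (X.2.card_eq Y.2)
  by_contra! hlt
  interval_cases hc : #(X.1 \ Y.1)
  · have hXY : X.1 ⊆ Y.1 := sdiff_eq_empty_iff_subset.1 (card_eq_zero.1 hc)
    exact hne (Subtype.ext (eq_of_subset_of_card_le hXY (Y.2.card_eq X.2).le))
  · obtain ⟨u, hu⟩ := card_eq_one.1 hc
    obtain ⟨w, hw⟩ := card_eq_one.1 (show #(Y.1 \ X.1) = 1 by omega)
    exact h (iGraph_adj_iff_s5.2 ⟨u, w, X.2.1.adj_of_sdiff_eq_singleton Y.2.1 hu hw, hu, hw⟩)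

lemma sdiff_eq_pair_of_not_adj {P : {S : Finset V // IsISet G S}} {x a : V} (hne : X ≠ Y)
    (h : ¬ (iGraph G).Adj X Y) (hXP : X.1 \ P.1 = {x}) (hPY : P.1 \ Y.1 = {a}) :
    X.1 \ Y.1 = {x, a} :=
  sdiff_eq_pair_of_sdiff_eq_singleton hXP hPY (two_le_card_sdiff_of_not_adj hne h)

end iGraph

theorem iGraph_induced_C4_general {V : Type*} [DecidableEq V] (G : SimpleGraph V)
    (X A B Y : {S : Finset V // IsISet G S})
    (hXA : (iGraph G).Adj X A) (hXB : (iGraph G).Adj X B)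
    (hAY : (iGraph G).Adj A Y) (hBY : (iGraph G).Adj B Y)
    (hXY : ¬ (iGraph G).Adj X Y)
    (hXYne : X ≠ Y) (hABne : A ≠ B) :
    ∃ x₁ x₂ y₁ y₂ : V, x₁ ∈ X.1 ∧ x₂ ∈ X.1 ∧ x₁ ≠ x₂ ∧
      G.Adj x₁ y₁ ∧ G.Adj x₂ y₂ ∧
      A.1 = insert y₁ (X.1.erase x₁) ∧
      B.1 = insert y₂ (X.1.erase x₂) ∧
      Y.1 = insert y₁ (insert y₂ ((X.1.erase x₁).erase x₂)) := by
  obtain ⟨x₁, y₁, hxy₁, hXA, hAX⟩ := iGraph_adj_iff_s5.1 hXA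
  obtain ⟨x₂, y₂, hxy₂, hXB, hBX⟩ := iGraph_adj_iff_s5.1 hXB
  obtain ⟨a₁, b₁, hab₁, hAY, hYA⟩ := iGraph_adj_iff_s5.1 hAY
  obtain ⟨a₂, b₂, -, hBY, hYB⟩ := iGraph_adj_iff_s5.1 hBY
  have hYX : ¬ (iGraph G).Adj Y X := fun h => hXY h.symm
  have hD₁ : X.1 \ Y.1 = {x₁, a₁} := sdiff_eq_pair_of_not_adj hXYne hXY hXA hAY
  have hD₂ : X.1 \ Y.1 = {x₂, a₂} := sdiff_eq_pair_of_not_adj hXYne hXY hXB hBY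
  have hE₁ : Y.1 \ X.1 = {b₁, y₁} := sdiff_eq_pair_of_not_adj hXYne.symm hYX hYA hAX
  have hE₂ : Y.1 \ X.1 = {b₂, y₂} := sdiff_eq_pair_of_not_adj hXYne.symm hYX hYB hBX
  have hxa : x₂ ≠ x₁ → x₂ = a₁ :=
    (mem_pair.1 (hD₁ ▸ hD₂ ▸ mem_insert_self x₂ {a₂})).resolve_left
  have hyb : y₂ ≠ y₁ → y₂ = b₁ :=
    (mem_pair.1 (hE₁ ▸ hE₂ ▸ mem_insert_of_mem (mem_singleton_self y₂))).resolve_right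
  have hA := eq_insert_erase_of_sdiff_eq_singleton_s5 hXA hAX
  have hB := eq_insert_erase_of_sdiff_eq_singleton_s5 hXB hBX
  obtain ⟨hx₁X, hx₁A⟩ := mem_sdiff_of_sdiff_eq_singleton hXA
  obtain ⟨hx₂X, -⟩ := mem_sdiff_of_sdiff_eq_singleton hXB
  obtain ⟨ha₁X, -⟩ := mem_sdiff.1 (hD₁ ▸ mem_insert_of_mem (mem_singleton_self a₁))
  have hx₁₂ : x₁ ≠ x₂ := by
    rintro rfl
    have hy₂₁ : y₂ ≠ y₁ := fun h => hABne (Subtype.ext (by rw [hA, hB, h]))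
    have ha₁x₁ : a₁ ≠ x₁ := ne_of_mem_of_not_mem (mem_sdiff_of_sdiff_eq_singleton hAY).1 hx₁A
    exact B.2.1.not_adj_of_eq_insert_erase hB ha₁X ha₁x₁ (hyb hy₂₁ ▸ hab₁)
  have hy₁₂ : y₁ ≠ y₂ := by
    rintro rfl
    exact A.2.1.not_adj_of_eq_insert_erase hA hx₂X hx₁₂.symm hxy₂
  refine ⟨x₁, x₂, y₁, y₂, hx₁X, hx₂X, hx₁₂, hxy₁, hxy₂, hA, hB, ?_⟩
  have hy₁x₂ : y₁ ≠ x₂ := (ne_of_mem_of_not_mem hx₂X (mem_sdiff_of_sdiff_eq_singleton hAX).2).symm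
  rw [eq_insert_erase_of_sdiff_eq_singleton_s5 hAY hYA, hA, ← hxa hx₁₂.symm, ← hyb hy₁₂.symm,
    erase_insert_of_ne hy₁x₂, insert_comm]

/-- Structure of an induced `C₄` in an `i`-graph: if `X, A, B, Y` induce a 4-cycle with
`XY` and `AB` non-edges, then there are vertices `x₁, x₂ ∈ X` and `y₁, y₂` of `G` with
`A = (X − x₁) ∪ {y₁}`, `B = (X − x₂) ∪ {y₂}` and `Y = (X − {x₁,x₂}) ∪ {y₁,y₂}`. -/
theorem iGraph_induced_C4 {V : Type*} [Fintype V] [DecidableEq V] (G : SimpleGraph V)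
    (X A B Y : {S : Finset V // IsISet G S})
    (hXA : (iGraph G).Adj X A) (hXB : (iGraph G).Adj X B)
    (hAY : (iGraph G).Adj A Y) (hBY : (iGraph G).Adj B Y)
    (hXY : ¬ (iGraph G).Adj X Y) (hAB : ¬ (iGraph G).Adj A B)
    (hXYne : X ≠ Y) (hABne : A ≠ B) :
    ∃ x₁ x₂ y₁ y₂ : V, x₁ ∈ X.1 ∧ x₂ ∈ X.1 ∧ x₁ ≠ x₂ ∧
      G.Adj x₁ y₁ ∧ G.Adj x₂ y₂ ∧
      A.1 = insert y₁ (X.1.erase x₁) ∧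
      B.1 = insert y₂ (X.1.erase x₂) ∧
      Y.1 = insert y₁ (insert y₂ ((X.1.erase x₁).erase x₂)) :=
  iGraph_induced_C4_general G X A B Y hXA hXB hAY hBY hXY hXYne hABne
end

section
/- There is no graph G whose i-graph is isomorphic to the diamond graph K₄ − e. -/
open Finset

variable {V : Type*}

/-- The diamond graph `K₄ − e` on vertices `0,1,2,3`, missing only the edge `01`. -/
def diamondGraph : SimpleGraph (Fin 4) :=
  SimpleGraph.fromEdgeSet {s(0,2), s(0,3), s(1,2), s(1,3), s(2,3)}

/-! Adjacent `i`-sets differ by one swap: `X \ Y = {x}`, `Y \ X = {y}` with `x ~ y`. Let `A` be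
adjacent to both ends of an edge `CD` of the `i`-graph, where `C \ D = {c}` and `D \ C = {d}`.
Since `c ~ d`, the independent set `A` misses `c` or `d`; if it misses `c`, then `C \ A = {c}`
and `A` is `C` with `c` swapped out, so `A = {a} ∪ (C ∩ D)` with `a ∉ C ∩ D`, and likewise if it
misses `d`. The two non-adjacent vertices of the diamond are both adjacent to the two ends of its
middle edge, so they are `{a} ∪ K` and `{b} ∪ K` with `a ≠ b`. Since `{b} ∪ K` dominates `a` and
`{a} ∪ K` is independent, `a ~ b`, which makes the two `i`-sets adjacent after all. -/

theorem IndepDom.isIndepSet {G : SimpleGraph V} {S : Finset V} (h : IndepDom G S) :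
    G.IsIndepSet (S : Set V) :=
  fun _ hx _ hy _ => h.1 hx hy

variable [DecidableEq V]

theorem Finset.eq_insert_inter_of_sdiff_eq {A C D : Finset V} {x : V}
    (hAC : A \ C = {x}) (hCA : C \ A = C \ D) : A = insert x (C ∩ D) := by
  calc A = A \ C ∪ A ∩ C := (sdiff_union_inter A C).symm
    _ = insert x (C \ (C \ A)) := by rw [hAC, sdiff_sdiff_self_left, inter_comm, insert_eq]
    _ = insert x (C ∩ D) := by rw [hCA, sdiff_sdiff_self_left]

theorem Finset.sdiff_eq_singleton_of_symmDiff_eq_pair {X Y : Finset V} {x y : V}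
    (h : symmDiff X Y = {x, y}) (hx : x ∈ X) (hy : y ∉ X) : X \ Y = {x} ∧ Y \ X = {y} := by
  have hmem : ∀ v, (v ∈ X ∧ v ∉ Y ∨ v ∈ Y ∧ v ∉ X) ↔ v = x ∨ v = y := fun v => by
    simpa [mem_symmDiff] using congrArg (v ∈ ·) h
  constructor <;> ext v <;> simp only [mem_sdiff, mem_singleton] <;> grind

theorem Finset.symmDiff_insert_insert_s6 {K : Finset V} {a b : V}
    (hab : a ≠ b) (ha : a ∉ K) (hb : b ∉ K) : symmDiff (insert a K) (insert b K) = {a, b} := by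
  ext v
  simp only [mem_symmDiff, mem_insert, mem_singleton]
  grind

variable {G : SimpleGraph V}

theorem exists_sdiff_eq_singleton_of_iGraph_adj {X Y : {S : Finset V // IsISet G S}}
    (h : (iGraph G).Adj X Y) : ∃ x y, G.Adj x y ∧ X.1 \ Y.1 = {x} ∧ Y.1 \ X.1 = {y} := by
  obtain ⟨x, y, hxy, hXY⟩ := h
  by_cases hx : x ∈ X.1
  · exact ⟨x, y, hxy, sdiff_eq_singleton_of_symmDiff_eq_pair hXY hx (X.2.1.1 hx · hxy)⟩
  · have hYX : symmDiff Y.1 X.1 = {x, y} := by rw [symmDiff_comm, hXY]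
    have hxY : x ∈ Y.1 := by
      simpa [mem_symmDiff, hx] using congrArg (x ∈ ·) hXY
    obtain ⟨hY, hX⟩ := sdiff_eq_singleton_of_symmDiff_eq_pair hYX hxY (Y.2.1.1 hxY · hxy)
    exact ⟨y, x, hxy.symm, hX, hY⟩

theorem iGraph_adj_of_eq_insert {X Y : {S : Finset V // IsISet G S}} {K : Finset V} {a b : V}
    (hab : G.Adj a b) (ha : a ∉ K) (hb : b ∉ K) (hX : X.1 = insert a K) (hY : Y.1 = insert b K) :
    (iGraph G).Adj X Y :=
  ⟨a, b, hab, by rw [hX, hY, symmDiff_insert_insert_s6 hab.ne ha hb]⟩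

theorem exists_eq_insert_inter_of_iGraph_triangle {A C D : {S : Finset V // IsISet G S}}
    (hAC : (iGraph G).Adj A C) (hAD : (iGraph G).Adj A D) (hCD : (iGraph G).Adj C D) :
    ∃ a ∉ C.1 ∩ D.1, A.1 = insert a (C.1 ∩ D.1) := by
  obtain ⟨c, d, hcd, hCD, hDC⟩ := exists_sdiff_eq_singleton_of_iGraph_adj hCD
  obtain ⟨x, y, -, hxAC, hyCA⟩ := exists_sdiff_eq_singleton_of_iGraph_adj hAC
  obtain ⟨x', y', -, hxAD, hyDA⟩ := exists_sdiff_eq_singleton_of_iGraph_adj hAD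
  have hc : c ∈ C.1 := (mem_sdiff.1 (hCD ▸ mem_singleton_self c)).1
  have hd : d ∈ D.1 := (mem_sdiff.1 (hDC ▸ mem_singleton_self d)).1
  by_cases hcA : c ∈ A.1
  · have hdA : d ∉ A.1 := fun hdA => A.2.1.1 hcA hdA hcd
    have hdy : d = y' := by simpa [hyDA] using mem_sdiff.2 ⟨hd, hdA⟩
    refine ⟨x', fun hx' => ?_, by
      rw [inter_comm]; exact eq_insert_inter_of_sdiff_eq hxAD (by rw [hyDA, hDC, hdy])⟩
    exact (mem_sdiff.1 (hxAD ▸ mem_singleton_self x')).2 (mem_inter.1 hx').2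
  · have hcy : c = y := by simpa [hyCA] using mem_sdiff.2 ⟨hc, hcA⟩
    refine ⟨x, fun hx => ?_, eq_insert_inter_of_sdiff_eq hxAC (by rw [hyCA, hCD, hcy])⟩
    exact (mem_sdiff.1 (hxAC ▸ mem_singleton_self x)).2 (mem_inter.1 hx).1

theorem adj_of_indepDom_insert {K : Finset V} {a b : V}
    (hA : G.IsIndepSet ((insert a K : Finset V) : Set V)) (hB : IndepDom G (insert b K))
    (ha : a ∉ K) (hab : a ≠ b) : G.Adj b a := by
  obtain ⟨u, hu, hua⟩ := hB.2 a (by simp [hab, ha])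
  rcases mem_insert.1 hu with rfl | huK
  · exact hua
  · exact absurd hua (hA (by simp [huK]) (by simp) hua.ne)

/-- No graph has the diamond `K₄ − e` as its `i`-graph. -/
theorem diamond_not_iGraph :
    ∀ (V : Type) [Fintype V] [DecidableEq V] (G : SimpleGraph V),
      IsEmpty (iGraph G ≃g diamondGraph) := by
  intro V _ _ G
  refine ⟨fun e => ?_⟩
  have edge : ∀ i j, diamondGraph.Adj i j → (iGraph G).Adj (e.symm i) (e.symm j) :=
    fun i j h => e.symm.map_rel_iff.2 h
  have h23 := edge 2 3 (by simp [diamondGraph])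
  obtain ⟨a, haK, hA⟩ := exists_eq_insert_inter_of_iGraph_triangle
    (edge 0 2 (by simp [diamondGraph])) (edge 0 3 (by simp [diamondGraph])) h23
  obtain ⟨b, hbK, hB⟩ := exists_eq_insert_inter_of_iGraph_triangle
    (edge 1 2 (by simp [diamondGraph])) (edge 1 3 (by simp [diamondGraph])) h23
  have hab : a ≠ b := by
    rintro rfl
    exact absurd (e.symm.injective (Subtype.ext (hA.trans hB.symm))) (by decide)
  have hba : G.Adj b a := adj_of_indepDom_insert (hA ▸ (e.symm 0).2.1.isIndepSet)
    (hB ▸ (e.symm 1).2.1) haK hab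
  have h01 := e.symm.map_rel_iff.1 (iGraph_adj_of_eq_insert hba.symm haK hbK hA hB)
  exact absurd h01 (by simp [diamondGraph])
end

section
/- There is no graph G whose i-graph is isomorphic to the complete bipartite graph K_{2,3}. -/
open Finset

variable {V : Type*}

/-
Two `i`-sets have the same size, so `#(X \ Y)` behaves like a distance on them: by maximality,
`i`-sets at distance one are adjacent in the `i`-graph, and distinct non-adjacent ones are at
distance at least two. In `K_{2,3}` let `A`, `B` be the two vertices of one side and `Z₀, Z₁, Z₂`
those of the other. The triangle inequality is then an equality along every path of length two
between non-adjacent vertices, which forces the element `aᵢ` with `A \ Zᵢ = {aᵢ}` to lie in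
`A \ B` and in `Zⱼ` for `j ≠ i`. So the `aᵢ` are three distinct elements of `A \ B`, a set with
at most `#(A \ Z₀) + #(Z₀ \ B) = 2` elements.
-/

namespace Finset

variable {α : Type*} [DecidableEq α]

theorem card_sdiff_le_card_sdiff_add_card_sdiff (X Y Z : Finset α) :
    #(X \ Y) ≤ #(X \ Z) + #(Z \ Y) :=
  (card_le_card (sdiff_triangle X Z Y)).trans (card_union_le _ _)

theorem sdiff_eq_union_of_card_sdiff_le_one {X Y Z : Finset α} (hXZ : #(X \ Z) ≤ 1)
    (hZY : #(Z \ Y) ≤ 1) (hXY : 2 ≤ #(X \ Y)) : X \ Y = X \ Z ∪ Z \ Y :=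
  eq_of_subset_of_card_le (sdiff_triangle X Z Y) <| by
    have := card_union_le (X \ Z) (Z \ Y)
    omega

theorem card_le_two_of_pairwise_two_le_card_sdiff {ι : Type*} [Fintype ι] {A B : Finset α}
    {Z : ι → Finset α} (hAB : 2 ≤ #(A \ B)) (hAZ : ∀ i, #(A \ Z i) = 1)
    (hZA : ∀ i, #(Z i \ A) ≤ 1) (hZB : ∀ i, #(Z i \ B) ≤ 1)
    (hZ : Pairwise fun i j => 2 ≤ #(Z i \ Z j)) : Fintype.card ι ≤ 2 := by
  cases isEmpty_or_nonempty ι with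
  | inl _ => simp
  | inr hι =>
    obtain ⟨i₀⟩ := hι
    choose a ha using fun i => card_eq_one.mp (hAZ i)
    have mem_A_sdiff_B (i : ι) : a i ∈ A \ B := by
      rw [sdiff_eq_union_of_card_sdiff_le_one (hAZ i).le (hZB i) hAB, ha i]
      exact mem_union_left _ (mem_singleton_self _)
    have mem_Z (i j : ι) (hij : i ≠ j) : a i ∈ Z j := by
      have h : a i ∈ Z j \ Z i := by
        rw [sdiff_eq_union_of_card_sdiff_le_one (hZA j) (hAZ i).le (hZ hij.symm), ha i]
        exact mem_union_right _ (mem_singleton_self _)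
      exact (mem_sdiff.mp h).1
    have not_mem_Z (i : ι) : a i ∉ Z i := (mem_sdiff.mp (ha i ▸ mem_singleton_self _)).2
    calc Fintype.card ι = #(univ : Finset ι) := card_univ.symm
      _ ≤ #(A \ B) := card_le_card_of_injOn a (fun i _ => mem_A_sdiff_B i) fun i _ j _ h => by
          by_contra hij
          exact not_mem_Z j (h ▸ mem_Z i j hij)
      _ ≤ #(A \ Z i₀) + #(Z i₀ \ B) := card_sdiff_le_card_sdiff_add_card_sdiff _ _ _
      _ ≤ 2 := by have := hZB i₀; have := hAZ i₀; omega

end Finset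

theorem IsISet.card_eq_s7 {G : SimpleGraph V} {X Y : Finset V} (hX : IsISet G X)
    (hY : IsISet G Y) : #X = #Y :=
  hX.2.trans hY.2.symm

section IGraph

variable [DecidableEq V] {G : SimpleGraph V}

theorem IndepDom.adj_of_sdiff_eq_singleton_s7 {X Y : Finset V} {u v : V} (hX : IndepDom G X)
    (hY : IndepDom G Y) (hu : X \ Y = {u}) (hv : Y \ X = {v}) : G.Adj u v := by
  obtain ⟨hvY, hvX⟩ := mem_sdiff.mp (hv ▸ mem_singleton_self v)
  obtain ⟨a, haX, hav⟩ := hX.2 v hvX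
  suffices a = u from this ▸ hav
  by_contra hau
  have haY : a ∈ Y := by
    by_contra haY
    exact hau (mem_singleton.mp (hu ▸ mem_sdiff.mpr ⟨haX, haY⟩))
  exact hY.1 haY hvY hav

theorem iGraph_adj_iff_card_sdiff_eq_one {X Y : {S : Finset V // IsISet G S}} :
    (iGraph G).Adj X Y ↔ #(X.1 \ Y.1) = 1 := by
  have hXY : #(X.1 \ Y.1) = #(Y.1 \ X.1) := card_sdiff_comm (X.2.card_eq_s7 Y.2)
  have card_symmDiff : #(symmDiff X.1 Y.1) = #(X.1 \ Y.1) + #(Y.1 \ X.1) :=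
    card_union_of_disjoint disjoint_sdiff_sdiff
  constructor
  · rintro ⟨x, y, hxy, h⟩
    rw [h, card_pair hxy.ne] at card_symmDiff
    omega
  · intro h
    obtain ⟨u, hu⟩ := card_eq_one.mp h
    obtain ⟨v, hv⟩ := card_eq_one.mp (hXY ▸ h)
    refine ⟨u, v, X.2.1.adj_of_sdiff_eq_singleton_s7 Y.2.1 hu hv, ?_⟩
    rw [Finset.symmDiff_def, hu, hv]
    rfl

theorem two_le_card_sdiff_of_not_iGraph_adj {X Y : {S : Finset V // IsISet G S}} (hne : X ≠ Y)
    (h : ¬ (iGraph G).Adj X Y) : 2 ≤ #(X.1 \ Y.1) := by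
  have hpos : #(X.1 \ Y.1) ≠ 0 := fun h0 =>
    hne <| Subtype.ext <| eq_of_subset_of_card_le
      (sdiff_eq_empty_iff_subset.mp (card_eq_zero.mp h0)) (Y.2.card_eq_s7 X.2).le
  have hone : #(X.1 \ Y.1) ≠ 1 := mt iGraph_adj_iff_card_sdiff_eq_one.mpr h
  omega

end IGraph

/-- No graph has `K_{2,3}` as its `i`-graph. -/
theorem K23_not_iGraph :
    ∀ (V : Type) [Fintype V] [DecidableEq V] (G : SimpleGraph V),
      IsEmpty (iGraph G ≃g completeBipartiteGraph (Fin 2) (Fin 3)) := by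
  intro V _ _ G
  refine ⟨fun f => ?_⟩
  have adj {x y} (h : (completeBipartiteGraph (Fin 2) (Fin 3)).Adj x y) :
      #((f.symm x).1 \ (f.symm y).1) = 1 :=
    iGraph_adj_iff_card_sdiff_eq_one.mp (f.symm.map_adj_iff.mpr h)
  have far {x y} (hne : x ≠ y) (h : ¬ (completeBipartiteGraph (Fin 2) (Fin 3)).Adj x y) :
      2 ≤ #((f.symm x).1 \ (f.symm y).1) :=
    two_le_card_sdiff_of_not_iGraph_adj (f.symm.injective.ne hne) (mt f.symm.map_adj_iff.mp h)
  have : Fintype.card (Fin 3) ≤ 2 :=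
    card_le_two_of_pairwise_two_le_card_sdiff (A := (f.symm (.inl 0)).1)
      (B := (f.symm (.inl 1)).1) (Z := fun i => (f.symm (.inr i)).1) (far (by simp) (by simp))
      (fun _ => adj (by simp)) (fun _ => (adj (by simp)).le) (fun _ => (adj (by simp)).le)
      (fun _ _ hij => far (by simpa using hij) (by simp))
  simp at this
end

section
/- If ℐ(G₁) ≅ H₁ and ℐ(G₂) ≅ H₂, then the i-graph of the disjoint union G₁ ∪ G₂ is isomorphic to the Cartesian product H₁ □ H₂. -/
open Finset

variable {V : Type*}

/-!
An independent dominating set of `G₁ ⊕g G₂` is exactly a disjoint union of independent dominating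
sets of `G₁` and `G₂`. Hence `i(G₁ ⊕g G₂) = i(G₁) + i(G₂)`, and the i-sets of the union are the
disjoint unions of an i-set of each summand. Since no edge joins the summands, two such unions
differ by swapping the ends of an edge iff one component is unchanged and the other differs by such
a swap, which is adjacency in the Cartesian product of the i-graphs.
-/

open SimpleGraph

def SimpleGraph.Iso.boxProdCongr {α α' β β' : Type*} {G : SimpleGraph α} {G' : SimpleGraph α'}
    {H : SimpleGraph β} {H' : SimpleGraph β'} (f : G ≃g G') (g : H ≃g H') :
    (G □ H) ≃g G' □ H' where
  toEquiv := f.toEquiv.prodCongr g.toEquiv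
  map_rel_iff' := by simp [boxProd_adj, Iso.map_adj_iff]

section Finset

variable {α β : Type*} [DecidableEq α] [DecidableEq β]

theorem Finset.symmDiff_eq_disjSum (u v : Finset (α ⊕ β)) :
    symmDiff u v = (symmDiff u.toLeft v.toLeft).disjSum (symmDiff u.toRight v.toRight) := by
  ext (x | x) <;> simp [mem_symmDiff]

theorem Finset.pair_inl_eq_disjSum (a b : α) :
    ({.inl a, .inl b} : Finset (α ⊕ β)) = ({a, b} : Finset α).disjSum ∅ := by
  ext (x | x) <;> simp

theorem Finset.pair_inr_eq_disjSum (a b : β) :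
    ({.inr a, .inr b} : Finset (α ⊕ β)) = (∅ : Finset α).disjSum {a, b} := by
  ext (x | x) <;> simp

end Finset

theorem exists_indepDom [Finite V] (G : SimpleGraph V) : ∃ S, IndepDom G S := by
  obtain ⟨S, hS⟩ := (Set.toFinite
    {S : Finset V | ∀ ⦃x⦄, x ∈ S → ∀ ⦃y⦄, y ∈ S → ¬ G.Adj x y}).exists_maximal ⟨∅, by simp⟩
  refine ⟨S, hS.prop, fun v hv => ?_⟩
  by_contra! hdom
  classical
  have hindep : ∀ ⦃x⦄, x ∈ insert v S → ∀ ⦃y⦄, y ∈ insert v S → ¬ G.Adj x y := by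
    simp only [mem_insert]
    rintro x (rfl | hx) y (rfl | hy)
    · exact G.loopless.irrefl _
    · exact fun h => hdom y hy h.symm
    · exact hdom x hx
    · exact hS.prop hx hy
  exact hv (hS.le_of_ge hindep (subset_insert v S) (mem_insert_self v S))

theorem iNum_le_card {G : SimpleGraph V} {S : Finset V} (hS : IndepDom G S) : iNum G ≤ #S :=
  Nat.sInf_le ⟨S, hS, rfl⟩

theorem exists_isISet [Finite V] (G : SimpleGraph V) : ∃ S, IsISet G S := by
  obtain ⟨S, hS⟩ := exists_indepDom G
  exact Nat.sInf_mem (s := {n | ∃ S, IndepDom G S ∧ #S = n}) ⟨_, S, hS, rfl⟩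

section Sum

variable {V₁ V₂ : Type*} {G₁ : SimpleGraph V₁} {G₂ : SimpleGraph V₂}

theorem indepDom_sum_iff {S : Finset (V₁ ⊕ V₂)} :
    IndepDom (G₁ ⊕g G₂) S ↔ IndepDom G₁ S.toLeft ∧ IndepDom G₂ S.toRight := by
  simp only [IndepDom, Sum.forall, Sum.exists, mem_toLeft, mem_toRight, sum_adj_inl, sum_adj_inr,
    not_adj_sum_inl_inr, (G₁ ⊕g G₂).adj_comm (.inr _) (.inl _),
    and_false, exists_false, or_false, false_or, not_false_eq_true, implies_true, and_true,
    forall_and]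
  tauto

theorem exists_adj_symmDiff_eq_pair_sum_iff [DecidableEq V₁] [DecidableEq V₂]
    {S T : Finset (V₁ ⊕ V₂)} :
    (∃ x y, (G₁ ⊕g G₂).Adj x y ∧ symmDiff S T = {x, y}) ↔
      (∃ a b, G₁.Adj a b ∧ symmDiff S.toLeft T.toLeft = {a, b}) ∧ S.toRight = T.toRight ∨
      (∃ a b, G₂.Adj a b ∧ symmDiff S.toRight T.toRight = {a, b}) ∧ S.toLeft = T.toLeft := by
  simp only [Sum.exists, sum_adj_inl, sum_adj_inr, not_adj_sum_inl_inr,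
    (G₁ ⊕g G₂).adj_comm (.inr _) (.inl _), false_and, exists_false, or_false, false_or,
    symmDiff_eq_disjSum S T, pair_inl_eq_disjSum, pair_inr_eq_disjSum, disjSum_inj,
    symmDiff_eq_empty, and_comm (a := S.toLeft = T.toLeft), ← and_assoc, exists_and_right]

variable [Finite V₁] [Finite V₂]

theorem iNum_sum : iNum (G₁ ⊕g G₂) = iNum G₁ + iNum G₂ := by
  obtain ⟨S₁, hS₁, hc₁⟩ := exists_isISet G₁
  obtain ⟨S₂, hS₂, hc₂⟩ := exists_isISet G₂
  obtain ⟨S, hS, hc⟩ := exists_isISet (G₁ ⊕g G₂)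
  have hS₁₂ : IndepDom (G₁ ⊕g G₂) (S₁.disjSum S₂) := by
    rwa [indepDom_sum_iff, toLeft_disjSum, toRight_disjSum, and_iff_left hS₂]
  rw [indepDom_sum_iff] at hS
  apply le_antisymm
  · calc iNum (G₁ ⊕g G₂) ≤ #(S₁.disjSum S₂) := iNum_le_card hS₁₂
      _ = iNum G₁ + iNum G₂ := by rw [card_disjSum, hc₁, hc₂]
  · calc iNum G₁ + iNum G₂ ≤ #S.toLeft + #S.toRight :=
          Nat.add_le_add (iNum_le_card hS.1) (iNum_le_card hS.2)
      _ = iNum (G₁ ⊕g G₂) := by rw [card_toLeft_add_card_toRight, hc]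

theorem isISet_sum_iff {S : Finset (V₁ ⊕ V₂)} :
    IsISet (G₁ ⊕g G₂) S ↔ IsISet G₁ S.toLeft ∧ IsISet G₂ S.toRight := by
  simp only [IsISet, indepDom_sum_iff, ← card_toLeft_add_card_toRight (u := S), iNum_sum]
  constructor
  · rintro ⟨⟨hL, hR⟩, hc⟩
    have := iNum_le_card hL
    have := iNum_le_card hR
    exact ⟨⟨hL, by omega⟩, hR, by omega⟩
  · rintro ⟨⟨hL, hcL⟩, hR, hcR⟩
    exact ⟨⟨hL, hR⟩, by rw [hcL, hcR]⟩

def iSetSumEquiv :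
    {S // IsISet (G₁ ⊕g G₂) S} ≃ {S // IsISet G₁ S} × {S // IsISet G₂ S} :=
  (sumEquiv.toEquiv.subtypeEquiv fun _ => isISet_sum_iff).trans Equiv.subtypeProdEquivProd

def iGraphSumIso [DecidableEq V₁] [DecidableEq V₂] :
    iGraph (G₁ ⊕g G₂) ≃g iGraph G₁ □ iGraph G₂ where
  toEquiv := iSetSumEquiv
  map_rel_iff' := by
    simp only [boxProd_adj, Subtype.ext_iff]
    exact exists_adj_symmDiff_eq_pair_sum_iff.symm

end Sum

open SimpleGraph in
/-- If `ℐ(G₁) ≅ H₁` and `ℐ(G₂) ≅ H₂`, then `ℐ(G₁ ∪ G₂) ≅ H₁ □ H₂`. -/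
theorem iGraph_disjoint_union_boxProd
    {V₁ V₂ W₁ W₂ : Type} [Fintype V₁] [DecidableEq V₁] [Fintype V₂] [DecidableEq V₂]
    (G₁ : SimpleGraph V₁) (G₂ : SimpleGraph V₂) (H₁ : SimpleGraph W₁) (H₂ : SimpleGraph W₂)
    (e₁ : iGraph G₁ ≃g H₁) (e₂ : iGraph G₂ ≃g H₂) :
    Nonempty (iGraph (G₁ ⊕g G₂) ≃g H₁ □ H₂) :=
  ⟨iGraphSumIso.trans (Iso.boxProdCongr e₁ e₂)⟩
end

section
/- Let G₁ and G₂ be graphs with i(G₁) = i(G₂) ≥ 2, and let G = G₁ ∨ G₂ be their join. Then the i-sets of G are exactly the i-sets of G₁ together with the i-sets of G₂, no i-set of G₁ is adjacent in ℐ(G) to an i-set of G₂, and ℐ(G) ≅ ℐ(G₁) ∪ ℐ(G₂) (disjoint union). -/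
open Finset

variable {V : Type*}

variable {V₁ V₂ : Type*}

/-- The join `G₁ ∨ G₂`: the disjoint union together with all edges between the two parts. -/
def joinGraph (G₁ : SimpleGraph V₁) (G₂ : SimpleGraph V₂) : SimpleGraph (V₁ ⊕ V₂) where
  Adj a b := match a, b with
    | Sum.inl a, Sum.inl b => G₁.Adj a b
    | Sum.inl _, Sum.inr _ => True
    | Sum.inr _, Sum.inl _ => True
    | Sum.inr a, Sum.inr b => G₂.Adj a b
  symm := by constructor; rintro (a | a) (b | b) h
             · exact h.symm
             · exact h
             · exact h
             · exact h.symm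
  loopless := by constructor; rintro (a | a) h
                 · exact G₁.loopless.irrefl a h
                 · exact G₂.loopless.irrefl a h

/-!
An independent set of `G₁ ∨ G₂` cannot meet both sides, so the maximal independent sets of the
join are exactly the maximal independent sets of `G₁` and of `G₂`, embedded by `Sum.inl` and
`Sum.inr`. Since `i(G₁) = i(G₂)`, the same holds for `i`-sets, and the embeddings preserve
symmetric differences, hence `i`-graph adjacency on each side. An `i`-set of `G₁` and one of
`G₂` are disjoint, so their symmetric difference has `2 i(G₁) ≥ 4` elements and they are never
adjacent.
-/

open Finset Function

lemma Finset.card_add_card_le_two_of_symmDiff_eq_pair {α : Type*} [DecidableEq α]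
    {X Y : Finset α} {x y : α} (hXY : Disjoint X Y) (h : symmDiff X Y = {x, y}) :
    #X + #Y ≤ 2 := by
  rw [← card_union_of_disjoint hXY, ← sup_eq_union, ← hXY.symmDiff_eq_sup, h]
  exact card_le_two

lemma Finset.exists_symmDiff_image_eq_pair_iff {α β : Type*} [DecidableEq α] [DecidableEq β]
    {f : α → β} (hf : Injective f) (p : β → β → Prop) (X Y : Finset α) :
    (∃ x y, p x y ∧ symmDiff (X.image f) (Y.image f) = {x, y}) ↔
      ∃ a b, p (f a) (f b) ∧ symmDiff X Y = {a, b} := by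
  rw [← image_symmDiff _ _ hf]
  constructor
  · rintro ⟨x, y, hp, h⟩
    obtain ⟨a, -, rfl⟩ := mem_image.1 (h ▸ mem_insert_self x {y})
    obtain ⟨b, -, rfl⟩ := mem_image.1 (h ▸ mem_insert_of_mem (mem_singleton_self y))
    exact ⟨a, b, hp, image_injective hf (by simpa [image_insert] using h)⟩
  · rintro ⟨a, b, hp, h⟩
    exact ⟨f a, f b, hp, by simp [h, image_insert]⟩

lemma Finset.disjoint_image_inl_image_inr {α β : Type*} [DecidableEq α] [DecidableEq β]
    (s : Finset α) (t : Finset β) : Disjoint (s.image Sum.inl) (t.image Sum.inr) :=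
  disjoint_left.2 (by simp)

section IndepDom

variable {W : Type*} {G : SimpleGraph V} {H : SimpleGraph W}

lemma IndepDom.nonempty [Nonempty V] {S : Finset V} (h : IndepDom G S) : S.Nonempty := by
  obtain ⟨v⟩ := ‹Nonempty V›
  by_cases hv : v ∈ S
  · exact ⟨v, hv⟩
  · obtain ⟨u, hu, -⟩ := h.2 v hv
    exact ⟨u, hu⟩

lemma exists_isISet_of_iNum_ne_zero (h : iNum G ≠ 0) : ∃ S, IsISet G S :=
  Nat.sInf_mem (Nat.nonempty_of_pos_sInf (Nat.pos_of_ne_zero h))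

lemma nonempty_of_iNum_ne_zero (h : iNum G ≠ 0) : Nonempty V := by
  obtain ⟨S, hS⟩ := exists_isISet_of_iNum_ne_zero h
  obtain ⟨v, -⟩ := card_ne_zero.1 (hS.2 ▸ h)
  exact ⟨v⟩

lemma indepDom_image_iff [Nonempty V] [DecidableEq W] {f : V → W} (hf : Injective f)
    (hadj : ∀ a b, H.Adj (f a) (f b) ↔ G.Adj a b) (hout : ∀ a, ∀ w ∉ Set.range f, H.Adj (f a) w)
    {T : Finset V} : IndepDom H (T.image f) ↔ IndepDom G T := by
  simp only [IndepDom, forall_mem_image, hadj, and_congr_right_iff]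
  intro hind
  constructor
  · intro hdom v hv
    obtain ⟨_, hw, hadj'⟩ := hdom (f v) (hf.mem_finset_image.not.2 hv)
    obtain ⟨u, hu, rfl⟩ := mem_image.1 hw
    exact ⟨u, hu, (hadj u v).1 hadj'⟩
  · intro hdom w hw
    by_cases hrange : w ∈ Set.range f
    · obtain ⟨v, rfl⟩ := hrange
      obtain ⟨u, hu, huv⟩ := hdom v (hf.mem_finset_image.not.1 hw)
      exact ⟨f u, mem_image_of_mem f hu, (hadj u v).2 huv⟩
    · obtain ⟨t, ht⟩ := IndepDom.nonempty ⟨hind, hdom⟩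
      exact ⟨f t, mem_image_of_mem f ht, hout t w hrange⟩

lemma not_disjoint_of_iGraph_adj [DecidableEq V] (hG : 2 ≤ iNum G) {X Y : {S // IsISet G S}}
    (h : (iGraph G).Adj X Y) : ¬ Disjoint X.1 Y.1 := by
  obtain ⟨x, y, -, hxy⟩ := h
  intro hdisj
  have := card_add_card_le_two_of_symmDiff_eq_pair hdisj hxy
  rw [X.2.2, Y.2.2] at this
  omega

end IndepDom

section Join

variable {G₁ : SimpleGraph V₁} {G₂ : SimpleGraph V₂} [DecidableEq V₁] [DecidableEq V₂]

lemma indepDom_join_image_inl_iff [Nonempty V₁] {T : Finset V₁} :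
    IndepDom (joinGraph G₁ G₂) (T.image Sum.inl) ↔ IndepDom G₁ T :=
  indepDom_image_iff Sum.inl_injective (fun _ _ ↦ Iff.rfl) <| by
    rintro a (w | w) hw
    exacts [absurd ⟨w, rfl⟩ hw, trivial]

lemma indepDom_join_image_inr_iff [Nonempty V₂] {T : Finset V₂} :
    IndepDom (joinGraph G₁ G₂) (T.image Sum.inr) ↔ IndepDom G₂ T :=
  indepDom_image_iff Sum.inr_injective (fun _ _ ↦ Iff.rfl) <| by
    rintro a (w | w) hw
    exacts [trivial, absurd ⟨w, rfl⟩ hw]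

lemma exists_eq_image_inl_or_inr_of_join {S : Finset (V₁ ⊕ V₂)}
    (hS : ∀ ⦃x⦄, x ∈ S → ∀ ⦃y⦄, y ∈ S → ¬ (joinGraph G₁ G₂).Adj x y) :
    (∃ T : Finset V₁, S = T.image Sum.inl) ∨ (∃ T : Finset V₂, S = T.image Sum.inr) := by
  by_cases hleft : ∃ a, Sum.inl a ∈ S
  · obtain ⟨a, ha⟩ := hleft
    refine .inl ⟨S.toLeft, ?_⟩
    ext (c | c)
    · simp
    · simpa using fun hc ↦ hS ha hc (show (joinGraph G₁ G₂).Adj (.inl a) (.inr c) from trivial)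
  · rw [not_exists] at hleft
    refine .inr ⟨S.toRight, ?_⟩
    ext (c | c) <;> simp [hleft]

lemma indepDom_join_iff [Nonempty V₁] [Nonempty V₂] {S : Finset (V₁ ⊕ V₂)} :
    IndepDom (joinGraph G₁ G₂) S ↔
      (∃ T, IndepDom G₁ T ∧ S = T.image Sum.inl) ∨ (∃ T, IndepDom G₂ T ∧ S = T.image Sum.inr) := by
  constructor
  · intro hS
    rcases exists_eq_image_inl_or_inr_of_join hS.1 with ⟨T, rfl⟩ | ⟨T, rfl⟩
    exacts [.inl ⟨T, indepDom_join_image_inl_iff.1 hS, rfl⟩,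
      .inr ⟨T, indepDom_join_image_inr_iff.1 hS, rfl⟩]
  · rintro (⟨T, hT, rfl⟩ | ⟨T, hT, rfl⟩)
    exacts [indepDom_join_image_inl_iff.2 hT, indepDom_join_image_inr_iff.2 hT]

lemma iNum_join [Nonempty V₁] [Nonempty V₂] (h₁ : ∃ T, IndepDom G₁ T) (h₂ : ∃ T, IndepDom G₂ T) :
    iNum (joinGraph G₁ G₂) = min (iNum G₁) (iNum G₂) := by
  have hcards : {n | ∃ S, IndepDom (joinGraph G₁ G₂) S ∧ #S = n} =
      {n | ∃ T, IndepDom G₁ T ∧ #T = n} ∪ {n | ∃ T, IndepDom G₂ T ∧ #T = n} := by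
    ext n
    simp [indepDom_join_iff, card_image_of_injective, Sum.inl_injective, Sum.inr_injective,
      or_and_right, exists_or]
  obtain ⟨T₁, hT₁⟩ := h₁
  obtain ⟨T₂, hT₂⟩ := h₂
  rw [iNum, hcards]
  exact csInf_union (OrderBot.bddBelow _) ⟨#T₁, T₁, hT₁, rfl⟩
    (OrderBot.bddBelow _) ⟨#T₂, T₂, hT₂, rfl⟩

lemma iNum_join_of_eq (heq : iNum G₁ = iNum G₂) (h₁ : iNum G₁ ≠ 0) :
    iNum (joinGraph G₁ G₂) = iNum G₁ := by
  have := nonempty_of_iNum_ne_zero h₁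
  have := nonempty_of_iNum_ne_zero (heq ▸ h₁)
  obtain ⟨T₁, hT₁⟩ := exists_isISet_of_iNum_ne_zero h₁
  obtain ⟨T₂, hT₂⟩ := exists_isISet_of_iNum_ne_zero (heq ▸ h₁)
  rw [iNum_join ⟨T₁, hT₁.1⟩ ⟨T₂, hT₂.1⟩, heq, min_self]

lemma isISet_join_iff (heq : iNum G₁ = iNum G₂) (h₁ : iNum G₁ ≠ 0) {S : Finset (V₁ ⊕ V₂)} :
    IsISet (joinGraph G₁ G₂) S ↔
      (∃ T, IsISet G₁ T ∧ S = T.image Sum.inl) ∨ (∃ T, IsISet G₂ T ∧ S = T.image Sum.inr) := by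
  have := nonempty_of_iNum_ne_zero h₁
  have := nonempty_of_iNum_ne_zero (heq ▸ h₁)
  simp only [IsISet, iNum_join_of_eq heq h₁, indepDom_join_iff]
  constructor
  · rintro ⟨⟨T, hT, rfl⟩ | ⟨T, hT, rfl⟩, hcard⟩
    · exact .inl ⟨T, ⟨hT, by rwa [card_image_of_injective _ Sum.inl_injective] at hcard⟩, rfl⟩
    · exact .inr ⟨T, ⟨hT, by rwa [card_image_of_injective _ Sum.inr_injective, heq] at hcard⟩, rfl⟩
  · rintro (⟨T, ⟨hT, hcard⟩, rfl⟩ | ⟨T, ⟨hT, hcard⟩, rfl⟩)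
    · exact ⟨.inl ⟨T, hT, rfl⟩, by rw [card_image_of_injective _ Sum.inl_injective, hcard]⟩
    · exact ⟨.inr ⟨T, hT, rfl⟩, by rw [card_image_of_injective _ Sum.inr_injective, hcard, heq]⟩

lemma not_iGraph_join_adj_of_eq_image_inl_of_eq_image_inr (heq : iNum G₁ = iNum G₂)
    (h₂ : 2 ≤ iNum G₁) {X Y : {S // IsISet (joinGraph G₁ G₂) S}} {T : Finset V₁} {U : Finset V₂}
    (hX : X.1 = T.image Sum.inl) (hY : Y.1 = U.image Sum.inr) :
    ¬ (iGraph (joinGraph G₁ G₂)).Adj X Y := fun h ↦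
  not_disjoint_of_iGraph_adj (by rwa [iNum_join_of_eq heq (by omega)]) h
    (hX ▸ hY ▸ disjoint_image_inl_image_inr T U)

end Join

section Iso

variable {G₁ : SimpleGraph V₁} {G₂ : SimpleGraph V₂} [DecidableEq V₁] [DecidableEq V₂]
  (heq : iNum G₁ = iNum G₂)

def joinISetOfSum (h₁ : iNum G₁ ≠ 0) :
    {T // IsISet G₁ T} ⊕ {T // IsISet G₂ T} → {S // IsISet (joinGraph G₁ G₂) S} :=
  Sum.elim (fun T ↦ ⟨T.1.image Sum.inl, (isISet_join_iff heq h₁).2 (.inl ⟨T, T.2, rfl⟩)⟩)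
    (fun T ↦ ⟨T.1.image Sum.inr, (isISet_join_iff heq h₁).2 (.inr ⟨T, T.2, rfl⟩)⟩)

lemma joinISetOfSum_bijective (h₁ : iNum G₁ ≠ 0) : Bijective (joinISetOfSum heq h₁) := by
  refine ⟨Injective.sumElim ?_ ?_ ?_, ?_⟩
  · exact fun T U h ↦ Subtype.ext (image_injective Sum.inl_injective (congrArg Subtype.val h))
  · exact fun T U h ↦ Subtype.ext (image_injective Sum.inr_injective (congrArg Subtype.val h))
  · intro T U h
    have hT := disjoint_image_inl_image_inr T.1 U.1
    rw [← Subtype.mk.inj h, disjoint_self, bot_eq_empty, image_eq_empty] at hT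
    exact h₁ (by rw [← T.2.2, hT, card_empty])
  · rintro ⟨S, hS⟩
    rcases (isISet_join_iff heq h₁).1 hS with ⟨T, hT, rfl⟩ | ⟨T, hT, rfl⟩
    exacts [⟨.inl ⟨T, hT⟩, rfl⟩, ⟨.inr ⟨T, hT⟩, rfl⟩]

noncomputable def iGraphJoinIso (h₂ : 2 ≤ iNum G₁) :
    iGraph G₁ ⊕g iGraph G₂ ≃g iGraph (joinGraph G₁ G₂) where
  toEquiv := Equiv.ofBijective _ (joinISetOfSum_bijective heq (by omega))
  map_rel_iff' := by
    rintro (X | X) (Y | Y)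
    · exact exists_symmDiff_image_eq_pair_iff Sum.inl_injective _ X.1 Y.1
    · exact iff_of_false (not_iGraph_join_adj_of_eq_image_inl_of_eq_image_inr heq h₂ rfl rfl)
        (by simp)
    · exact iff_of_false (fun h ↦ not_iGraph_join_adj_of_eq_image_inl_of_eq_image_inr heq h₂
        rfl rfl h.symm) (by simp)
    · exact exists_symmDiff_image_eq_pair_iff Sum.inr_injective _ X.1 Y.1

end Iso

open SimpleGraph in
theorem iGraph_join_general {V₁ V₂ : Type} [DecidableEq V₁] [DecidableEq V₂]
    (G₁ : SimpleGraph V₁) (G₂ : SimpleGraph V₂)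
    (heq : iNum G₁ = iNum G₂) (h2 : 2 ≤ iNum G₁) :
    (∀ S : Finset (V₁ ⊕ V₂),
       IsISet (joinGraph G₁ G₂) S ↔
         ((∃ T : Finset V₁, IsISet G₁ T ∧ S = T.image Sum.inl) ∨
          (∃ T : Finset V₂, IsISet G₂ T ∧ S = T.image Sum.inr))) ∧
    (∀ X Y : {S : Finset (V₁ ⊕ V₂) // IsISet (joinGraph G₁ G₂) S},
       (∃ T : Finset V₁, IsISet G₁ T ∧ X.1 = T.image Sum.inl) →
       (∃ T : Finset V₂, IsISet G₂ T ∧ Y.1 = T.image Sum.inr) →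
       ¬ (iGraph (joinGraph G₁ G₂)).Adj X Y) ∧
    Nonempty (iGraph (joinGraph G₁ G₂) ≃g (iGraph G₁ ⊕g iGraph G₂)) := by
  refine ⟨fun S ↦ isISet_join_iff heq (by omega), ?_, ⟨(iGraphJoinIso heq h2).symm⟩⟩
  rintro X Y ⟨T, -, hX⟩ ⟨U, -, hY⟩
  exact not_iGraph_join_adj_of_eq_image_inl_of_eq_image_inr heq h2 hX hY

open SimpleGraph in
/-- If `i(G₁) = i(G₂) ≥ 2`, then the `i`-sets of `G₁ ∨ G₂` are exactly those of `G₁`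
together with those of `G₂`, no `i`-set of `G₁` is adjacent to one of `G₂` in the `i`-graph,
and `ℐ(G₁ ∨ G₂) ≅ ℐ(G₁) ∪ ℐ(G₂)`. -/
theorem iGraph_join {V₁ V₂ : Type} [Fintype V₁] [DecidableEq V₁] [Fintype V₂] [DecidableEq V₂]
    (G₁ : SimpleGraph V₁) (G₂ : SimpleGraph V₂)
    (heq : iNum G₁ = iNum G₂) (h2 : 2 ≤ iNum G₁) :
    (∀ S : Finset (V₁ ⊕ V₂),
       IsISet (joinGraph G₁ G₂) S ↔
         ((∃ T : Finset V₁, IsISet G₁ T ∧ S = T.image Sum.inl) ∨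
          (∃ T : Finset V₂, IsISet G₂ T ∧ S = T.image Sum.inr))) ∧
    (∀ X Y : {S : Finset (V₁ ⊕ V₂) // IsISet (joinGraph G₁ G₂) S},
       (∃ T : Finset V₁, IsISet G₁ T ∧ X.1 = T.image Sum.inl) →
       (∃ T : Finset V₂, IsISet G₂ T ∧ Y.1 = T.image Sum.inr) →
       ¬ (iGraph (joinGraph G₁ G₂)).Adj X Y) ∧
    Nonempty (iGraph (joinGraph G₁ G₂) ≃g (iGraph G₁ ⊕g iGraph G₂)) :=
  iGraph_join_general G₁ G₂ heq h2
end
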